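/- arXiv:2404.18093 — 6 statements merged into one kernel-verified Lean document; each statement's English description precedes it below -/
import Mathlib

section
/- Let f : X → ℝ be differentiable and α-exp-concave on a convex set X ⊂ ℝᵈ (meaning x ↦ exp(-α f(x)) is concave on X), and suppose ‖x - y‖ ≤ D and ‖∇f(x)‖ ≤ G for all x, y ∈ X. Then for every γ ≤ (1/2)·min{1/(GD), α} and all x, y ∈ X: f(x) ≥ f(y) + ⟨∇f(y), x - y⟩ + (γ/2)·⟨∇f(y), x - y⟩². -/
/-!
Concavity of `exp (-α f)` gives its first-order bound at `y`, which after taking logarithms reads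
`α (f x - f y) ≥ -log (1 - α t)` with `t = ⟪∇f y, x - y⟫`. The scalar inequality
`-log (1 - u) ≥ u + c u²`, valid as long as `2 c (1 - u) ≤ 1` (so that the derivative of the
difference has the sign of `u`), is applied at `u = α t`, `c = γ / (2α)`; the bound
`γ |t| ≤ γ G D ≤ 1/2` is what keeps `u` in that range.
-/

open Real Set RealInnerProductSpace

theorem hasDerivAt_neg_log_one_sub_sub_sub (c : ℝ) {v : ℝ} (hv : v < 1) :
    HasDerivAt (fun u => -log (1 - u) - u - c * u ^ 2)
      (v * (1 - 2 * c * (1 - v)) / (1 - v)) v := by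
  have hv' : 1 - v ≠ 0 := by linarith
  have hlog := ((hasDerivAt_id' v).const_sub 1).log hv'
  refine ((hlog.neg.sub (hasDerivAt_id' v)).sub ((hasDerivAt_pow 2 v).const_mul c)).congr_deriv ?_
  field_simp
  ring

theorem add_mul_sq_le_neg_log_one_sub {c u : ℝ} (hc : 2 * c ≤ 1) (hcu : 2 * c * (1 - u) ≤ 1)
    (hu : u < 1) : u + c * u ^ 2 ≤ -log (1 - u) := by
  set H : ℝ → ℝ := fun v => -log (1 - v) - v - c * v ^ 2 with hH
  suffices 0 ≤ H u by simp only [hH] at this; linarith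
  have hH0 : H 0 = 0 := by simp [hH]
  have hH' : ∀ v ∈ uIcc u 0, HasDerivAt H (v * (1 - 2 * c * (1 - v)) / (1 - v)) v :=
    fun v hv =>
    hasDerivAt_neg_log_one_sub_sub_sub c (by rcases mem_uIcc.1 hv with h | h <;> linarith)
  -- `v ↦ 2 c (1 - v)` is affine, so it stays below `1` between its values at `0` and `u`
  have hfactor : ∀ v ∈ uIcc u 0, 0 ≤ 1 - 2 * c * (1 - v) := by
    intro v hv
    rcases mem_uIcc.1 hv with h | h <;> rcases le_total c 0 with hc0 | hc0 <;> nlinarith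
  have hcont : ContinuousOn H (uIcc u 0) := fun v hv => (hH' v hv).continuousAt.continuousWithinAt
  rcases le_total u 0 with hu0 | hu0
  · have hanti : AntitoneOn H (Icc u 0) := by
      rw [uIcc_of_le hu0] at hH' hfactor hcont
      refine antitoneOn_of_hasDerivWithinAt_nonpos (convex_Icc u 0) hcont
        (fun v hv => (hH' v (interior_subset hv)).hasDerivWithinAt) fun v hv => ?_
      rw [interior_Icc] at hv
      exact div_nonpos_of_nonpos_of_nonneg (mul_nonpos_of_nonpos_of_nonneg hv.2.le
        (hfactor v (Ioo_subset_Icc_self hv))) (by linarith [hv.2])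
    simpa [hH0] using hanti ⟨le_rfl, hu0⟩ ⟨hu0, le_rfl⟩ hu0
  · have hmono : MonotoneOn H (Icc 0 u) := by
      rw [uIcc_of_ge hu0] at hH' hfactor hcont
      refine monotoneOn_of_hasDerivWithinAt_nonneg (convex_Icc 0 u) hcont
        (fun v hv => (hH' v (interior_subset hv)).hasDerivWithinAt) fun v hv => ?_
      rw [interior_Icc] at hv
      exact div_nonneg (mul_nonneg hv.1.le (hfactor v (Ioo_subset_Icc_self hv)))
        (by linarith [hv.2])
    simpa [hH0] using hmono ⟨le_rfl, hu0⟩ ⟨hu0, le_rfl⟩ hu0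

theorem ConcaveOn.le_add_of_hasFDerivAt {E : Type*} [NormedAddCommGroup E] [NormedSpace ℝ E]
    {s : Set E} {h : E → ℝ} {h' : E →L[ℝ] ℝ} {x y : E} (hh : ConcaveOn ℝ s h) (hx : x ∈ s)
    (hy : y ∈ s) (hh' : HasFDerivAt h h' y) : h x ≤ h y + h' (x - y) := by
  set ℓ : ℝ →ᵃ[ℝ] E := AffineMap.lineMap y x
  have hderiv : HasDerivAt (h ∘ ℓ) (h' (x - y)) 0 := by
    rw [← AffineMap.lineMap_apply_zero (k := ℝ) y x] at hh'
    exact hh'.comp_hasDerivAt 0 AffineMap.hasDerivAt_lineMap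
  have := (hh.comp_affineMap ℓ).slope_le_of_hasDerivAt (by simpa [ℓ] using hy)
    (by simpa [ℓ] using hx) zero_lt_one hderiv
  simpa [slope_def_field, ℓ, map_sub, add_comm] using this

theorem neg_log_one_sub_le_of_concaveOn_exp {E : Type*} [NormedAddCommGroup E] [NormedSpace ℝ E]
    {s : Set E} {f : E → ℝ} {f' : E →L[ℝ] ℝ} {α : ℝ} {x y : E}
    (hexp : ConcaveOn ℝ s fun x => exp (-α * f x)) (hx : x ∈ s) (hy : y ∈ s)
    (hf : HasFDerivAt f f' y) :
    α * f' (x - y) < 1 ∧ -log (1 - α * f' (x - y)) ≤ α * (f x - f y) := by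
  have hfirst : exp (-α * f x) ≤ exp (-α * f y) * (1 - α * f' (x - y)) := by
    have := hexp.le_add_of_hasFDerivAt hx hy ((hf.const_mul (-α)).exp)
    simp only [smul_apply, smul_eq_mul] at this
    linarith
  have hpos : 0 < 1 - α * f' (x - y) :=
    pos_of_mul_pos_right ((exp_pos _).trans_le hfirst) (exp_pos _).le
  refine ⟨by linarith, ?_⟩
  have := log_le_log (exp_pos _) hfirst
  rw [log_mul (exp_pos _).ne' hpos.ne', log_exp, log_exp] at this
  linarith

theorem add_add_mul_sq_le_of_concaveOn_exp {E : Type*} [NormedAddCommGroup E] [NormedSpace ℝ E]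
    {s : Set E} {f : E → ℝ} {f' : E →L[ℝ] ℝ} {α γ : ℝ} {x y : E} (hα : 0 < α)
    (hγα : γ ≤ α / 2) (hγ : γ * |f' (x - y)| ≤ 1 / 2)
    (hexp : ConcaveOn ℝ s fun x => exp (-α * f x)) (hx : x ∈ s) (hy : y ∈ s)
    (hf : HasFDerivAt f f' y) :
    f y + f' (x - y) + γ / 2 * f' (x - y) ^ 2 ≤ f x := by
  obtain ⟨hlt, hlog⟩ := neg_log_one_sub_le_of_concaveOn_exp hexp hx hy hf
  set t := f' (x - y)
  set c := γ / (2 * α) with hc_def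
  have h2c : 2 * c = γ / α := by rw [hc_def]; field_simp
  have hc : 2 * c ≤ 1 := by
    rw [h2c, div_le_one hα]
    linarith
  have hcu : 2 * c * (1 - α * t) ≤ 1 := by
    rw [h2c]
    rcases le_total γ 0 with hγ0 | hγ0
    · exact (mul_nonpos_of_nonpos_of_nonneg (div_nonpos_of_nonpos_of_nonneg hγ0 hα.le)
        (by linarith)).trans zero_le_one
    · have hexpand : γ / α * (1 - α * t) = γ / α - γ * t := by field_simp
      have hhalf : γ / α ≤ 1 / 2 := by rw [div_le_iff₀ hα]; linarith
      nlinarith [neg_abs_le t]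
  have key := add_mul_sq_le_neg_log_one_sub hc hcu hlt
  have hquad : c * (α * t) ^ 2 = α * (γ / 2 * t ^ 2) := by rw [hc_def]; field_simp
  refine le_of_mul_le_mul_left ?_ hα
  linarith

theorem stmt_3_general {d : ℕ} (X : Set (EuclideanSpace ℝ (Fin d))) (f : EuclideanSpace ℝ (Fin d) → ℝ)
    (f' : EuclideanSpace ℝ (Fin d) → EuclideanSpace ℝ (Fin d))
    (hdiff : ∀ x ∈ X, HasGradientAt f (f' x) x)
    (α D G : ℝ) (hα : 0 < α) (hD : 0 < D) (hG : 0 < G)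
    (hexp : ConcaveOn ℝ X (fun x => Real.exp (-α * f x)))
    (hdiam : ∀ x ∈ X, ∀ y ∈ X, ‖x - y‖ ≤ D)
    (hgrad : ∀ x ∈ X, ‖f' x‖ ≤ G)
    (γ : ℝ) (hγ : γ ≤ 1 / 2 * min (1 / (G * D)) α) :
    ∀ x ∈ X, ∀ y ∈ X,
      f x ≥ f y + ⟪f' y, x - y⟫ + γ / 2 * ⟪f' y, x - y⟫ ^ 2 := by
  intro x hx y hy
  have hs : |⟪f' y, x - y⟫| ≤ G * D :=
    (abs_real_inner_le_norm _ _).trans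
      (mul_le_mul (hgrad y hy) (hdiam x hx y hy) (norm_nonneg _) hG.le)
  have hγα : γ ≤ α / 2 := by linarith [min_le_right (1 / (G * D)) α]
  have hγs : γ * |⟪f' y, x - y⟫| ≤ 1 / 2 :=
    calc γ * |⟪f' y, x - y⟫| ≤ 1 / 2 * (1 / (G * D)) * |⟪f' y, x - y⟫| := by
          gcongr
          exact hγ.trans (by gcongr; exact min_le_left _ _)
      _ ≤ 1 / 2 * (1 / (G * D)) * (G * D) := by gcongr
      _ = 1 / 2 := by field_simp
  exact add_add_mul_sq_le_of_concaveOn_exp hα hγα hγs hexp hx hy (hdiff y hy).hasFDerivAt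

theorem stmt_3 {d : ℕ} (X : Set (EuclideanSpace ℝ (Fin d))) (hX : Convex ℝ X)
    (hXne : X.Nonempty) (f : EuclideanSpace ℝ (Fin d) → ℝ)
    (f' : EuclideanSpace ℝ (Fin d) → EuclideanSpace ℝ (Fin d))
    (hdiff : ∀ x ∈ X, HasGradientAt f (f' x) x)
    (α D G : ℝ) (hα : 0 < α) (hD : 0 < D) (hG : 0 < G)
    (hexp : ConcaveOn ℝ X (fun x => Real.exp (-α * f x)))
    (hdiam : ∀ x ∈ X, ∀ y ∈ X, ‖x - y‖ ≤ D)
    (hgrad : ∀ x ∈ X, ‖f' x‖ ≤ G)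
    (γ : ℝ) (hγ : γ ≤ 1 / 2 * min (1 / (G * D)) α) :
    ∀ x ∈ X, ∀ y ∈ X,
      f x ≥ f y + ⟪f' y, x - y⟫ + γ / 2 * ⟪f' y, x - y⟫ ^ 2 :=
  stmt_3_general X f f' hdiff α D G hα hD hG hexp hdiam hgrad γ hγ
end

section
/- Let a ∈ ℝᵈ, b ∈ {-1, +1}, and define f(x) = log(1 + exp(-b·⟨a, x⟩)). Then for all x with ‖x‖ ≤ 1, the matrix inequality ∇²f(x) ⪰ exp(-‖a‖)·∇f(x)·∇f(x)ᵀ holds; hence f is exp(-‖a‖)-exp-concave on the unit ball. -/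
open RealInnerProductSpace Real Set

/-! On the unit ball `t = b⟪a, x⟫ ≥ -‖a‖` by Cauchy–Schwarz, and both claims reduce to this one
variable. The quadratic-form inequality is `exp (-‖a‖) ≤ exp t`. For concavity,
`exp (-α f x) = (1 + exp (-t)) ^ (-α)`, and the second derivative of `t ↦ (1 + exp (-t)) ^ (-α)`
is `α e⁻ᵗ (1 + e⁻ᵗ) ^ (-α - 2) (α e⁻ᵗ - 1)`, which is nonpositive exactly when `t ≥ log α`;
for `α = exp (-‖a‖)` this is `t ≥ -‖a‖`. Concavity then passes to the ball through the
linear map `x ↦ ⟪b • a, x⟫`. -/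

lemma neg_norm_le_inner_of_norm_le_one {E : Type*} [NormedAddCommGroup E] [InnerProductSpace ℝ E]
    (a : E) {x : E} (hx : ‖x‖ ≤ 1) : -‖a‖ ≤ ⟪a, x⟫ := by
  have hcs := abs_real_inner_le_norm a x
  have hax : ‖a‖ * ‖x‖ ≤ ‖a‖ := mul_le_of_le_one_right (norm_nonneg a) hx
  linarith [neg_abs_le ⟪a, x⟫]

lemma exp_mul_sq_div_one_add_exp_le {c t : ℝ} (ht : -c ≤ t) (u : ℝ) :
    exp (-c) * (u / (1 + exp t)) ^ 2 ≤ u ^ 2 * exp t / (1 + exp t) ^ 2 := by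
  rw [div_pow, ← mul_div_assoc, mul_comm (u ^ 2)]
  gcongr

lemma hasDerivAt_one_add_exp_neg_rpow (p t : ℝ) :
    HasDerivAt (fun s => (1 + exp (-s)) ^ p) (-p * exp (-t) * (1 + exp (-t)) ^ (p - 1)) t := by
  have hu : HasDerivAt (fun s => 1 + exp (-s)) (-exp (-t)) t := by
    simpa using ((hasDerivAt_exp (-t)).comp t (hasDerivAt_neg t)).const_add 1
  convert hu.rpow_const (p := p) (Or.inl (by positivity : (0 : ℝ) < 1 + exp (-t)).ne') using 1
  ring

lemma concaveOn_one_add_exp_neg_rpow_neg {α : ℝ} (hα : 0 < α) :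
    ConcaveOn ℝ (Ici (log α)) (fun t => (1 + exp (-t)) ^ (-α)) := by
  refine concaveOn_of_hasDerivWithinAt2_nonpos (convex_Ici _)
    (f' := fun t => α * (exp (-t) * (1 + exp (-t)) ^ (-α - 1)))
    (f'' := fun t => α * exp (-t) * (1 + exp (-t)) ^ (-α - 1 - 1) * (α * exp (-t) - 1))
    ?_ (fun t _ => ?_) (fun t _ => ?_) (fun t ht => ?_)
  · exact fun t _ => (hasDerivAt_one_add_exp_neg_rpow (-α) t).continuousAt.continuousWithinAt
  · exact ((hasDerivAt_one_add_exp_neg_rpow (-α) t).congr_deriv (by ring)).hasDerivWithinAt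
  · refine ((((hasDerivAt_exp (-t)).comp t (hasDerivAt_neg t)).mul
      (hasDerivAt_one_add_exp_neg_rpow (-α - 1) t)).const_mul α
      |>.congr_deriv ?_).hasDerivWithinAt
    have hpos : 0 < 1 + exp (-t) := by positivity
    rw [rpow_sub_one hpos.ne' (-α - 1)]
    simp only [Function.comp_apply]
    field_simp
    ring
  · rw [interior_Ici, mem_Ioi] at ht
    have hlt : α * exp (-t) < 1 := by
      rw [← exp_log hα, ← exp_add, exp_lt_one_iff]
      linarith
    have : 0 ≤ α * exp (-t) * (1 + exp (-t)) ^ (-α - 1 - 1) := by positivity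
    nlinarith

theorem stmt_5 {d : ℕ} (a : EuclideanSpace ℝ (Fin d)) (b : ℝ)
    (hb : b = -1 ∨ b = 1)
    (f : EuclideanSpace ℝ (Fin d) → ℝ)
    (hf : f = fun x => Real.log (1 + Real.exp (-b * ⟪a, x⟫))) :
    (∀ x : EuclideanSpace ℝ (Fin d), ‖x‖ ≤ 1 →
      ∀ v : EuclideanSpace ℝ (Fin d),
        Real.exp (-‖a‖) * (b * ⟪a, v⟫ / (1 + Real.exp (b * ⟪a, x⟫))) ^ 2 ≤
          b ^ 2 * ⟪a, v⟫ ^ 2 * Real.exp (b * ⟪a, x⟫) /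
            (1 + Real.exp (b * ⟪a, x⟫)) ^ 2) ∧
    ConcaveOn ℝ {x : EuclideanSpace ℝ (Fin d) | ‖x‖ ≤ 1}
      (fun x => Real.exp (-Real.exp (-‖a‖) * f x)) := by
  set w := b • a
  have hw : ‖w‖ = ‖a‖ := by rcases hb with rfl | rfl <;> simp [w]
  have hinner (x) : b * ⟪a, x⟫ = ⟪w, x⟫ := (real_inner_smul_left a x b).symm
  have hball (x : EuclideanSpace ℝ (Fin d)) (hx : ‖x‖ ≤ 1) : -‖a‖ ≤ ⟪w, x⟫ :=
    hw ▸ neg_norm_le_inner_of_norm_le_one w hx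
  refine ⟨fun x hx v => ?_, ?_⟩
  · rw [← mul_pow, hinner x]
    exact exp_mul_sq_div_one_add_exp_le (hball x hx) _
  have hfx : (fun x => exp (-exp (-‖a‖) * f x)) =
      (fun t => (1 + exp (-t)) ^ (-exp (-‖a‖))) ∘ innerₛₗ ℝ w := by
    funext x
    rw [Function.comp_apply, innerₛₗ_apply_apply, rpow_def_of_pos (by positivity), hf, ← hinner]
    ring_nf
  rw [hfx]
  refine ((concaveOn_one_add_exp_neg_rpow_neg (exp_pos _)).comp_linearMap _).subset
    (fun x hx => ?_) ?_
  · simpa [log_exp] using hball x hx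
  · simpa [Metric.closedBall, dist_eq_norm] using convex_closedBall (0 : EuclideanSpace ℝ (Fin d)) 1
end

section
/- Let X ⊂ ℝᵈ be convex with diameter at most D, let f₁,…,f_T : X → ℝ be differentiable convex with gradient norms at most G, and let γ_t ≥ 0 be such that f_t(x) ≥ f_t(y) + ⟨∇f_t(y), x-y⟩ + (γ_t/2)⟨∇f_t(y), x-y⟩² for all x, y ∈ X. Then for any γ > 0, any points x₁,…,x_T ∈ X and any x ∈ X, letting R = ∑_t (f_t(x_t) - f_t(x)), R̃ = ∑_t ⟨∇f_t(x_t), x_t - x⟩, V = ∑_t ⟨∇f_t(x_t), x_t - x⟩², and k_γ = ∑_t max{1 - γ_t/γ, 0}, we have R ≤ R̃ - (γ/2)V + (γ/2)·k_γ·G²·D². In particular, if R ≥ 0 then V ≤ (2/γ)·R̃ + k_γ·G²·D². -/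
open RealInnerProductSpace

theorem stmt_11 {d T : ℕ} (X : Set (EuclideanSpace ℝ (Fin d))) (hX : Convex ℝ X)
    (D G : ℝ) (hD : 0 < D) (hG : 0 < G)
    (f : Fin T → EuclideanSpace ℝ (Fin d) → ℝ)
    (f' : Fin T → EuclideanSpace ℝ (Fin d) → EuclideanSpace ℝ (Fin d))
    (hdiff : ∀ t, ∀ x ∈ X, HasGradientAt (f t) (f' t x) x)
    (hconv : ∀ t, ConvexOn ℝ X (f t))
    (hdiam : ∀ x ∈ X, ∀ y ∈ X, ‖x - y‖ ≤ D)
    (hgrad : ∀ t, ∀ x ∈ X, ‖f' t x‖ ≤ G)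
    (γt : Fin T → ℝ) (hγt : ∀ t, 0 ≤ γt t)
    (hcurv : ∀ t, ∀ x ∈ X, ∀ y ∈ X,
      f t x ≥ f t y + ⟪f' t y, x - y⟫ + γt t / 2 * ⟪f' t y, x - y⟫ ^ 2)
    (γ : ℝ) (hγ : 0 < γ)
    (xs : Fin T → EuclideanSpace ℝ (Fin d)) (hxs : ∀ t, xs t ∈ X)
    (x : EuclideanSpace ℝ (Fin d)) (hx : x ∈ X)
    (R Rtilde V kγ : ℝ)
    (hR : R = ∑ t, (f t (xs t) - f t x))
    (hRt : Rtilde = ∑ t, ⟪f' t (xs t), xs t - x⟫)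
    (hV : V = ∑ t, ⟪f' t (xs t), xs t - x⟫ ^ 2)
    (hk : kγ = ∑ t, max (1 - γt t / γ) 0) :
    R ≤ Rtilde - γ / 2 * V + γ / 2 * kγ * G ^ 2 * D ^ 2 ∧
      (0 ≤ R → V ≤ 2 / γ * Rtilde + kγ * G ^ 2 * D ^ 2) := by
  have key : ∀ t : Fin T, f t (xs t) - f t x ≤
      ⟪f' t (xs t), xs t - x⟫ - γ / 2 * ⟪f' t (xs t), xs t - x⟫ ^ 2
        + γ / 2 * max (1 - γt t / γ) 0 * G ^ 2 * D ^ 2 := by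
    intro t
    have h1 := hcurv t x hx (xs t) (hxs t)
    have hneg : ⟪f' t (xs t), x - xs t⟫ = -⟪f' t (xs t), xs t - x⟫ := by
      rw [← inner_neg_right]; congr 1; abel
    set s := ⟪f' t (xs t), xs t - x⟫ with hs
    rw [hneg] at h1
    have hsb : s ^ 2 ≤ G ^ 2 * D ^ 2 := by
      have h2 : |s| ≤ ‖f' t (xs t)‖ * ‖xs t - x‖ := abs_real_inner_le_norm _ _
      have h3 : ‖f' t (xs t)‖ ≤ G := hgrad t _ (hxs t)
      have h4 : ‖xs t - x‖ ≤ D := hdiam _ (hxs t) _ hx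
      have h5 : |s| ≤ G * D := h2.trans (mul_le_mul h3 h4 (norm_nonneg _) hG.le)
      calc s ^ 2 = |s| ^ 2 := (sq_abs s).symm
        _ ≤ (G * D) ^ 2 := pow_le_pow_left₀ (abs_nonneg s) h5 2
        _ = G ^ 2 * D ^ 2 := by ring
    have hm1 : 1 - γt t / γ ≤ max (1 - γt t / γ) 0 := le_max_left _ _
    have hm0 : (0:ℝ) ≤ max (1 - γt t / γ) 0 := le_max_right _ _
    have hsq : 0 ≤ s ^ 2 := sq_nonneg s
    -- need (γ - γt t)/2 * s^2 ≤ γ/2 * m * G^2 * D^2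
    set m := max (1 - γt t / γ) 0 with hmdef
    have hmain : (γ - γt t) * s ^ 2 ≤ γ * m * G ^ 2 * D ^ 2 := by
      rcases le_or_gt (γ - γt t) 0 with h | h
      · have : (γ - γt t) * s ^ 2 ≤ 0 := mul_nonpos_of_nonpos_of_nonneg h hsq
        have : (0:ℝ) ≤ γ * m * G ^ 2 * D ^ 2 := by positivity
        linarith [mul_nonpos_of_nonpos_of_nonneg h hsq]
      · have hmeq : γ * m ≥ γ - γt t := by
          have := mul_le_mul_of_nonneg_left hm1 hγ.le
          calc γ - γt t = γ * (1 - γt t / γ) := by field_simp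
            _ ≤ γ * m := this
        calc (γ - γt t) * s ^ 2 ≤ (γ - γt t) * (G ^ 2 * D ^ 2) := by
              exact mul_le_mul_of_nonneg_left hsb h.le
          _ ≤ γ * m * (G ^ 2 * D ^ 2) := by
              have hGD : (0:ℝ) ≤ G ^ 2 * D ^ 2 := by positivity
              exact mul_le_mul_of_nonneg_right hmeq hGD
          _ = γ * m * G ^ 2 * D ^ 2 := by ring
    nlinarith [hmain, h1]
  have hsum : R ≤ Rtilde - γ / 2 * V + γ / 2 * kγ * G ^ 2 * D ^ 2 := by
    rw [hR, hRt, hV, hk]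
    have h := Finset.sum_le_sum (fun t (_ : t ∈ Finset.univ) => key t)
    calc ∑ t, (f t (xs t) - f t x)
        ≤ ∑ t, (⟪f' t (xs t), xs t - x⟫ - γ / 2 * ⟪f' t (xs t), xs t - x⟫ ^ 2
          + γ / 2 * max (1 - γt t / γ) 0 * G ^ 2 * D ^ 2) := h
      _ = (∑ t, ⟪f' t (xs t), xs t - x⟫) - γ / 2 * (∑ t, ⟪f' t (xs t), xs t - x⟫ ^ 2)
          + γ / 2 * (∑ t, max (1 - γt t / γ) 0) * G ^ 2 * D ^ 2 := by
          simp only [Finset.sum_add_distrib, Finset.sum_sub_distrib, Finset.mul_sum,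
            Finset.sum_mul]
  refine ⟨hsum, fun hR0 => ?_⟩
  have hknn : 0 ≤ kγ := by
    rw [hk]; exact Finset.sum_nonneg fun t _ => le_max_right _ _
  have h2 : γ / 2 * V ≤ Rtilde + γ / 2 * kγ * G ^ 2 * D ^ 2 := by linarith
  have h3 : V ≤ (2 / γ) * (Rtilde + γ / 2 * kγ * G ^ 2 * D ^ 2) := by
    have hpos : (0:ℝ) < 2 / γ := by positivity
    have := mul_le_mul_of_nonneg_left h2 hpos.le
    calc V = 2 / γ * (γ / 2 * V) := by field_simp
      _ ≤ _ := this
  calc V ≤ (2 / γ) * (Rtilde + γ / 2 * kγ * G ^ 2 * D ^ 2) := h3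
    _ = 2 / γ * Rtilde + kγ * G ^ 2 * D ^ 2 := by field_simp
end

section
/- Let X ⊂ ℝᵈ be convex with diameter at most D, let f₁,…,f_T : X → ℝ be differentiable with gradient norms at most G, and let λ_t ≥ 0 be such that f_t is λ_t-strongly convex. Then for any λ > 0, any x₁,…,x_T ∈ X and any x ∈ X, letting R = ∑_t (f_t(x_t) - f_t(x)), R̃ = ∑_t ⟨∇f_t(x_t), x_t - x⟩, W = G²·∑_t ‖x_t - x‖², and k_λ = ∑_t max{1 - λ_t/λ, 0}, we have R ≤ R̃ - (λ/(2G²))·W + (λ/2)·k_λ·D². In particular, if R ≥ 0 then W ≤ (2G²/λ)·R̃ + k_λ·G²·D². -/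
open RealInnerProductSpace

theorem stmt_12 {d T : ℕ} (X : Set (EuclideanSpace ℝ (Fin d))) (hX : Convex ℝ X)
    (D G : ℝ) (hD : 0 < D) (hG : 0 < G)
    (f : Fin T → EuclideanSpace ℝ (Fin d) → ℝ)
    (f' : Fin T → EuclideanSpace ℝ (Fin d) → EuclideanSpace ℝ (Fin d))
    (hdiff : ∀ t, ∀ x ∈ X, HasGradientAt (f t) (f' t x) x)
    (hdiam : ∀ x ∈ X, ∀ y ∈ X, ‖x - y‖ ≤ D)
    (hgrad : ∀ t, ∀ x ∈ X, ‖f' t x‖ ≤ G)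
    (lamt : Fin T → ℝ) (hlamt : ∀ t, 0 ≤ lamt t)
    (hsc : ∀ t, ∀ x ∈ X, ∀ y ∈ X,
      f t x ≥ f t y + ⟪f' t y, x - y⟫ + lamt t / 2 * ‖x - y‖ ^ 2)
    (lam : ℝ) (hlam : 0 < lam)
    (xs : Fin T → EuclideanSpace ℝ (Fin d)) (hxs : ∀ t, xs t ∈ X)
    (x : EuclideanSpace ℝ (Fin d)) (hx : x ∈ X)
    (R Rtilde W klam : ℝ)
    (hR : R = ∑ t, (f t (xs t) - f t x))
    (hRt : Rtilde = ∑ t, ⟪f' t (xs t), xs t - x⟫)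
    (hW : W = G ^ 2 * ∑ t, ‖xs t - x‖ ^ 2)
    (hk : klam = ∑ t, max (1 - lamt t / lam) 0) :
    R ≤ Rtilde - lam / (2 * G ^ 2) * W + lam / 2 * klam * D ^ 2 ∧
      (0 ≤ R → W ≤ 2 * G ^ 2 / lam * Rtilde + klam * G ^ 2 * D ^ 2) := by
  have key : ∀ t : Fin T,
      f t (xs t) - f t x ≤ ⟪f' t (xs t), xs t - x⟫
        - lam / 2 * ‖xs t - x‖ ^ 2 + lam / 2 * max (1 - lamt t / lam) 0 * D ^ 2 := by
    intro t
    have h := hsc t x hx (xs t) (hxs t)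
    have hinn : ⟪f' t (xs t), x - xs t⟫ = -⟪f' t (xs t), xs t - x⟫ := by
      rw [← inner_neg_right]; congr 1; abel
    have hnorm : ‖x - xs t‖ = ‖xs t - x‖ := norm_sub_rev _ _
    rw [hinn, hnorm] at h
    have hr : ‖xs t - x‖ ≤ D := hdiam (xs t) (hxs t) x hx
    have hr0 : (0:ℝ) ≤ ‖xs t - x‖ := norm_nonneg _
    have hlt := hlamt t
    -- from h : f t x ≥ f t (xs t) + (-⟪...⟫) + lamt t / 2 * r^2
    have h1 : f t (xs t) - f t x ≤ ⟪f' t (xs t), xs t - x⟫ - lamt t / 2 * ‖xs t - x‖ ^ 2 := by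
      linarith
    have h2 : lam / 2 * ‖xs t - x‖ ^ 2 - lamt t / 2 * ‖xs t - x‖ ^ 2
        ≤ lam / 2 * max (1 - lamt t / lam) 0 * D ^ 2 := by
      rcases le_or_gt lam (lamt t) with hc | hc
      · have hmax : (0:ℝ) ≤ max (1 - lamt t / lam) 0 := le_max_right _ _
        have hrhs : 0 ≤ lam / 2 * max (1 - lamt t / lam) 0 * D ^ 2 := by positivity
        nlinarith [mul_nonneg (by linarith : (0:ℝ) ≤ lamt t - lam) (sq_nonneg (‖xs t - x‖))]
      · have hmax : max (1 - lamt t / lam) 0 = 1 - lamt t / lam := by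
          apply max_eq_left
          have : lamt t / lam < 1 := (div_lt_one hlam).2 hc
          linarith
        rw [hmax]
        have hdiv : lam / 2 * (1 - lamt t / lam) = (lam - lamt t) / 2 := by
          field_simp
        rw [hdiv]
        nlinarith [sq_nonneg (‖xs t - x‖), mul_self_le_mul_self hr0 hr]
    linarith
  have hsum : R ≤ Rtilde - lam / 2 * (∑ t, ‖xs t - x‖ ^ 2) + lam / 2 * klam * D ^ 2 := by
    rw [hR, hRt, hk]
    simp only [Finset.mul_sum, Finset.sum_mul, ← Finset.sum_sub_distrib,
      ← Finset.sum_add_distrib]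
    exact Finset.sum_le_sum fun t _ => key t
  have hG2 : (0:ℝ) < G ^ 2 := by positivity
  have hWeq : lam / (2 * G ^ 2) * W = lam / 2 * (∑ t, ‖xs t - x‖ ^ 2) := by
    rw [hW]; field_simp
  constructor
  · rw [hWeq]; exact hsum
  · intro hR0
    have := hsum
    rw [← hWeq] at this
    have h3 : lam / (2 * G ^ 2) * W ≤ Rtilde + lam / 2 * klam * D ^ 2 := by linarith
    have hmul : W ≤ (2 * G ^ 2 / lam) * (Rtilde + lam / 2 * klam * D ^ 2) := by
      rw [← le_div_iff₀' (by positivity : (0:ℝ) < lam / (2 * G ^ 2))] at h3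
      calc W = lam / (2 * G ^ 2) * W / (lam / (2 * G ^ 2)) := by field_simp
        _ ≤ (Rtilde + lam / 2 * klam * D ^ 2) / (lam / (2 * G ^ 2)) := by
            apply div_le_div_of_nonneg_right ?_ (by positivity)
            linarith [h3]
        _ = (2 * G ^ 2 / lam) * (Rtilde + lam / 2 * klam * D ^ 2) := by
            field_simp
    calc W ≤ (2 * G ^ 2 / lam) * (Rtilde + lam / 2 * klam * D ^ 2) := hmul
      _ = 2 * G ^ 2 / lam * Rtilde + klam * G ^ 2 * D ^ 2 := by field_simp
end

section
/- Let (f_1,…,f_T) be a sequence of convex functions on X with diameter bound D and gradient bound G and suppose each f_t satisfies the curvature inequality f_t(x) ≥ f_t(y) + ⟨∇f_t(y), x-y⟩ + (γ_t/2)⟨∇f_t(y), x-y⟩² with γ_t = γ for all t outside a set I of size k and γ_t = 0 on I (where γ = (1/2)min{1/(GD), α}). If the iterates x_t satisfy ∑_{t=1}^T (⟨∇f_t(x_t), x_t - x*⟩ - (γ/2)⟨∇f_t(x_t), x_t - x*⟩²) ≤ (2d/γ)·log T (the ONS potential bound), then the regret satisfies R_T = ∑_t (f_t(x_t) - f_t(x*))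 ≤ (2d/γ)·log T + (1/4)·k·G·D. -/
open RealInnerProductSpace

theorem stmt_13 {d T : ℕ} (X : Set (EuclideanSpace ℝ (Fin d))) (hX : Convex ℝ X)
    (D G α : ℝ) (hD : 0 < D) (hG : 0 < G) (hα : 0 < α)
    (γ : ℝ) (hγdef : γ = 1 / 2 * min (1 / (G * D)) α)
    (f : Fin T → EuclideanSpace ℝ (Fin d) → ℝ)
    (f' : Fin T → EuclideanSpace ℝ (Fin d) → EuclideanSpace ℝ (Fin d))
    (hdiff : ∀ t, ∀ x ∈ X, HasGradientAt (f t) (f' t x) x)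
    (hconv : ∀ t, ConvexOn ℝ X (f t))
    (hdiam : ∀ x ∈ X, ∀ y ∈ X, ‖x - y‖ ≤ D)
    (hgrad : ∀ t, ∀ x ∈ X, ‖f' t x‖ ≤ G)
    (I : Finset (Fin T)) (k : ℕ) (hI : I.card = k)
    (hcurv : ∀ t ∉ I, ∀ x ∈ X, ∀ y ∈ X,
      f t x ≥ f t y + ⟪f' t y, x - y⟫ + γ / 2 * ⟪f' t y, x - y⟫ ^ 2)
    (hcurvI : ∀ t ∈ I, ∀ x ∈ X, ∀ y ∈ X,
      f t x ≥ f t y + ⟪f' t y, x - y⟫)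
    (xs : Fin T → EuclideanSpace ℝ (Fin d)) (hxs : ∀ t, xs t ∈ X)
    (xstar : EuclideanSpace ℝ (Fin d)) (hxstar : xstar ∈ X)
    (hmin : ∀ x ∈ X, ∑ t, f t xstar ≤ ∑ t, f t x)
    (hONS : ∑ t, (⟪f' t (xs t), xs t - xstar⟫ -
        γ / 2 * ⟪f' t (xs t), xs t - xstar⟫ ^ 2) ≤ 2 * d / γ * Real.log T) :
    ∑ t, (f t (xs t) - f t xstar) ≤ 2 * d / γ * Real.log T + 1 / 4 * k * G * D := by
  set P : Fin T → ℝ := fun t => ⟪f' t (xs t), xs t - xstar⟫ with hP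
  have hγpos : 0 < γ := by
    rw [hγdef]
    have : 0 < min (1 / (G * D)) α := lt_min (by positivity) hα
    linarith
  have hγle : γ ≤ 1 / (2 * G * D) := by
    rw [hγdef]
    have h1 : min (1 / (G * D)) α ≤ 1 / (G * D) := min_le_left _ _
    have hGD : 0 < G * D := by positivity
    rw [show (1 : ℝ) / (2 * G * D) = 1 / 2 * (1 / (G * D)) by field_simp]
    linarith
  -- Cauchy-Schwarz bound
  have hPb : ∀ t, |P t| ≤ G * D := by
    intro t
    have h1 : |P t| ≤ ‖f' t (xs t)‖ * ‖xs t - xstar‖ := abs_real_inner_le_norm _ _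
    have h2 := hgrad t (xs t) (hxs t)
    have h3 := hdiam (xs t) (hxs t) xstar hxstar
    calc |P t| ≤ ‖f' t (xs t)‖ * ‖xs t - xstar‖ := h1
      _ ≤ G * D := by
        apply mul_le_mul h2 h3 (norm_nonneg _) hG.le
  have key : ∀ t, f t (xs t) - f t xstar ≤
      (P t - γ / 2 * P t ^ 2) + (if t ∈ I then 1 / 4 * G * D else 0) := by
    intro t
    have hinner : (⟪f' t (xs t), xstar - xs t⟫ : ℝ) = -(P t) := by
      rw [hP, show xstar - xs t = -(xs t - xstar) by abel, inner_neg_right]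
    by_cases ht : t ∈ I
    · have h := hcurvI t ht xstar hxstar (xs t) (hxs t)
      rw [hinner] at h
      have hsq : γ / 2 * P t ^ 2 ≤ 1 / 4 * G * D := by
        have h1 : P t ^ 2 ≤ (G * D) ^ 2 := by
          have := hPb t
          nlinarith [abs_nonneg (P t), sq_abs (P t)]
        have h2 : γ / 2 * P t ^ 2 ≤ γ / 2 * (G * D) ^ 2 := by nlinarith
        have h3 : γ / 2 * (G * D) ^ 2 ≤ 1 / (2 * G * D) / 2 * (G * D) ^ 2 := by
          have : (0:ℝ) < (G * D) ^ 2 := by positivity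
          nlinarith
        have h4 : 1 / (2 * G * D) / 2 * (G * D) ^ 2 = 1 / 4 * G * D := by
          field_simp; ring
        linarith
      simp only [ht, if_true]
      linarith
    · have h := hcurv t ht xstar hxstar (xs t) (hxs t)
      rw [hinner] at h
      have hsq : (-(P t)) ^ 2 = P t ^ 2 := by ring
      rw [hsq] at h
      simp only [ht, if_false]
      linarith
  calc ∑ t, (f t (xs t) - f t xstar)
      ≤ ∑ t, ((P t - γ / 2 * P t ^ 2) + (if t ∈ I then 1 / 4 * G * D else 0)) :=
        Finset.sum_le_sum fun t _ => key t
    _ = (∑ t, (P t - γ / 2 * P t ^ 2)) + ∑ t, (if t ∈ I then 1 / 4 * G * D else 0) := by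
        rw [Finset.sum_add_distrib]
    _ ≤ 2 * d / γ * Real.log T + 1 / 4 * k * G * D := by
        have h2 : ∑ t, (if t ∈ I then 1 / 4 * G * D else 0) = 1 / 4 * k * G * D := by
          rw [Finset.sum_ite_mem, Finset.univ_inter, Finset.sum_const, hI]
          simp [nsmul_eq_mul]; ring
        rw [h2]
        have h1 : ∑ t, (P t - γ / 2 * P t ^ 2) ≤ 2 * d / γ * Real.log T := hONS
        linarith
end

section
/- Let A₀ = ε·I_d with ε = √2·G/D > 0, and for t = 1,…,k set A_t = A_{t-1} + (G/(D√(2t)))·I_d. If ‖g_t‖ ≤ G for all t, then ∑_{t=1}^{k} ⟨A_t⁻¹ g_t, g_t⟩ ≤ √2·G·D·(√(k+1) - 1). -/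
open Matrix

theorem stmt_15 {d k : ℕ} (D G : ℝ) (hD : 0 < D) (hG : 0 < G)
    (ε : ℝ) (hε : ε = Real.sqrt 2 * G / D)
    (A : ℕ → Matrix (Fin d) (Fin d) ℝ)
    (hA0 : A 0 = ε • (1 : Matrix (Fin d) (Fin d) ℝ))
    (hstep : ∀ t ∈ Finset.Icc 1 k,
      A t = A (t - 1) + (G / (D * Real.sqrt (2 * t))) • (1 : Matrix (Fin d) (Fin d) ℝ))
    (g : ℕ → Fin d → ℝ) (hg : ∀ t ∈ Finset.Icc 1 k, ∑ i, (g t i) ^ 2 ≤ G ^ 2) :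
    ∑ t ∈ Finset.Icc 1 k, g t ⬝ᵥ ((A t)⁻¹ *ᵥ g t) ≤
      Real.sqrt 2 * G * D * (Real.sqrt (k + 1) - 1) := by
  set c : ℕ → ℝ := fun t => ε + ∑ i ∈ Finset.Icc 1 t, G / (D * Real.sqrt (2 * i)) with hc
  have s2 : (0:ℝ) < Real.sqrt 2 := by positivity
  have h2s : Real.sqrt 2 ^ 2 = 2 := Real.sq_sqrt (by norm_num)
  have hcsucc : ∀ n : ℕ, c (n+1) = c n + G / (D * Real.sqrt (2 * ((n:ℝ)+1))) := by
    intro n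
    simp only [hc]
    rw [Finset.sum_Icc_succ_top (by omega)]
    push_cast; ring
  -- A t = c t • 1 for t ≤ k
  have hAc : ∀ t, t ≤ k → A t = c t • (1 : Matrix (Fin d) (Fin d) ℝ) := by
    intro t
    induction t with
    | zero => intro _; simp [hc, hA0]
    | succ n ih =>
      intro hle
      have hn : n ≤ k := Nat.le_of_succ_le hle
      have hmem : n + 1 ∈ Finset.Icc 1 k := by simp; omega
      have hs := hstep (n+1) hmem
      simp only [Nat.add_sub_cancel] at hs
      have hcast : ((n+1 : ℕ) : ℝ) = (n:ℝ)+1 := by push_cast; ring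
      rw [hs, ih hn, hcsucc n, add_smul, hcast]
      simp only [hc, add_smul]
  -- lower bound on c t
  have hclb : ∀ t : ℕ, Real.sqrt 2 * (G / D) * Real.sqrt (t + 1) ≤ c t := by
    intro t
    induction t with
    | zero =>
      have h0 : c 0 = ε := by simp [hc]
      rw [h0, hε]
      have h1 : ((0:ℕ):ℝ) + 1 = 1 := by norm_num
      rw [h1, Real.sqrt_one, mul_one, mul_div_assoc]
    | succ n ih =>
      rw [hcsucc n]
      have h1 : Real.sqrt (2 * ((n:ℝ)+1)) = Real.sqrt 2 * Real.sqrt ((n:ℝ)+1) := by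
        rw [← Real.sqrt_mul (by norm_num)]
      have hx : (0:ℝ) < Real.sqrt ((n:ℝ)+1) := Real.sqrt_pos.mpr (by positivity)
      have hy : (0:ℝ) < Real.sqrt ((n:ℝ)+2) := Real.sqrt_pos.mpr (by positivity)
      have hx2 : Real.sqrt ((n:ℝ)+1) ^ 2 = (n:ℝ)+1 := Real.sq_sqrt (by positivity)
      have hy2 : Real.sqrt ((n:ℝ)+2) ^ 2 = (n:ℝ)+2 := Real.sq_sqrt (by positivity)
      have key : Real.sqrt 2 * Real.sqrt ((n:ℝ)+2) ≤
          Real.sqrt 2 * Real.sqrt ((n:ℝ)+1) + 1 / (Real.sqrt 2 * Real.sqrt ((n:ℝ)+1)) := by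
        rw [← sub_le_iff_le_add', le_div_iff₀ (by positivity)]
        nlinarith [sq_nonneg (Real.sqrt ((n:ℝ)+1) - Real.sqrt ((n:ℝ)+2)), hx.le, hy.le, s2.le]
      have hGD : (0:ℝ) < G / D := by positivity
      have hrw : G / (D * (Real.sqrt 2 * Real.sqrt ((n:ℝ)+1))) =
          (G / D) * (1 / (Real.sqrt 2 * Real.sqrt ((n:ℝ)+1))) := by
        field_simp
      have step : Real.sqrt 2 * (G / D) * Real.sqrt ((n:ℝ)+1+1) ≤
          Real.sqrt 2 * (G / D) * Real.sqrt ((n:ℝ)+1)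
            + G / (D * (Real.sqrt 2 * Real.sqrt ((n:ℝ)+1))) := by
        rw [hrw, show ((n:ℝ)+1+1) = ((n:ℝ)+2) by ring]
        calc Real.sqrt 2 * (G / D) * Real.sqrt ((n:ℝ)+2)
            = (G / D) * (Real.sqrt 2 * Real.sqrt ((n:ℝ)+2)) := by ring
          _ ≤ (G / D) * (Real.sqrt 2 * Real.sqrt ((n:ℝ)+1)
                + 1 / (Real.sqrt 2 * Real.sqrt ((n:ℝ)+1))) :=
              mul_le_mul_of_nonneg_left key hGD.le
          _ = Real.sqrt 2 * (G / D) * Real.sqrt ((n:ℝ)+1)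
                + (G / D) * (1 / (Real.sqrt 2 * Real.sqrt ((n:ℝ)+1))) := by ring
      push_cast
      push_cast at ih
      calc Real.sqrt 2 * (G / D) * Real.sqrt ((n:ℝ)+1+1)
          ≤ Real.sqrt 2 * (G / D) * Real.sqrt ((n:ℝ)+1)
              + G / (D * (Real.sqrt 2 * Real.sqrt ((n:ℝ)+1))) := step
        _ ≤ c n + G / (D * Real.sqrt (2 * ((n:ℝ)+1))) := by rw [h1]; gcongr
  -- termwise bound
  have hterm : ∀ t ∈ Finset.Icc 1 k,
      g t ⬝ᵥ ((A t)⁻¹ *ᵥ g t) ≤ Real.sqrt 2 * G * D * (Real.sqrt ((t:ℝ) + 1) - Real.sqrt t) := by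
    intro t ht
    obtain ⟨ht1, htk⟩ := Finset.mem_Icc.mp ht
    have hlb := hclb t
    have hlbpos : (0:ℝ) < Real.sqrt 2 * (G / D) * Real.sqrt ((t:ℝ) + 1) := by positivity
    have hcpos : 0 < c t := lt_of_lt_of_le hlbpos hlb
    have hinv : (A t)⁻¹ = (c t)⁻¹ • (1 : Matrix (Fin d) (Fin d) ℝ) := by
      apply Matrix.inv_eq_right_inv
      rw [hAc t htk, Matrix.smul_mul, Matrix.mul_smul, Matrix.one_mul, smul_smul,
        mul_inv_cancel₀ hcpos.ne', one_smul]
    rw [hinv]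
    have hquad : g t ⬝ᵥ (((c t)⁻¹ • (1 : Matrix (Fin d) (Fin d) ℝ)) *ᵥ g t)
        = (c t)⁻¹ * ∑ i, (g t i) ^ 2 := by
      rw [Matrix.smul_mulVec, Matrix.one_mulVec, dotProduct_smul]
      simp [dotProduct, sq, Finset.mul_sum]
    rw [hquad]
    have hS0 : (0:ℝ) ≤ ∑ i, (g t i) ^ 2 := Finset.sum_nonneg fun i _ => sq_nonneg _
    have h1 : (c t)⁻¹ * ∑ i, (g t i) ^ 2 ≤ (c t)⁻¹ * G ^ 2 := by
      gcongr; exact hg t ht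
    have h2 : (c t)⁻¹ * G ^ 2 ≤ G ^ 2 / (Real.sqrt 2 * (G / D) * Real.sqrt ((t:ℝ) + 1)) := by
      rw [inv_mul_eq_div]
      gcongr
    have h3 : G ^ 2 / (Real.sqrt 2 * (G / D) * Real.sqrt ((t:ℝ) + 1))
        = G * D / (Real.sqrt 2 * Real.sqrt ((t:ℝ) + 1)) := by
      field_simp
    have hxt : (0:ℝ) < Real.sqrt ((t:ℝ)+1) := Real.sqrt_pos.mpr (by positivity)
    have ht2 : Real.sqrt ((t:ℝ)+1) ^ 2 = (t:ℝ)+1 := Real.sq_sqrt (by positivity)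
    have ht3 : Real.sqrt (t:ℝ) ^ 2 = (t:ℝ) := Real.sq_sqrt (by positivity)
    have hts : (0:ℝ) ≤ Real.sqrt (t:ℝ) := Real.sqrt_nonneg _
    have hst : Real.sqrt (t:ℝ) * Real.sqrt ((t:ℝ)+1) ≤ (t:ℝ) + 1/2 := by
      rw [← Real.sqrt_mul (by positivity)]
      calc Real.sqrt ((t:ℝ) * ((t:ℝ)+1)) ≤ Real.sqrt (((t:ℝ)+1/2)^2) :=
            Real.sqrt_le_sqrt (by nlinarith)
        _ = (t:ℝ)+1/2 := Real.sqrt_sq (by positivity)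
    have h4 : G * D / (Real.sqrt 2 * Real.sqrt ((t:ℝ) + 1))
        ≤ Real.sqrt 2 * G * D * (Real.sqrt ((t:ℝ) + 1) - Real.sqrt t) := by
      rw [div_le_iff₀ (by positivity)]
      have e1 : Real.sqrt 2 * Real.sqrt 2 = 2 := Real.mul_self_sqrt (by norm_num)
      have e2 : Real.sqrt ((t:ℝ)+1) * Real.sqrt ((t:ℝ)+1) = (t:ℝ)+1 :=
        Real.mul_self_sqrt (by positivity)
      have expand : Real.sqrt 2 * G * D * (Real.sqrt ((t:ℝ)+1) - Real.sqrt t)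
            * (Real.sqrt 2 * Real.sqrt ((t:ℝ)+1))
          = G * D * ((Real.sqrt 2 * Real.sqrt 2) * (Real.sqrt ((t:ℝ)+1) * Real.sqrt ((t:ℝ)+1))
            - (Real.sqrt 2 * Real.sqrt 2) * (Real.sqrt (t:ℝ) * Real.sqrt ((t:ℝ)+1))) := by ring
      rw [expand, e1, e2]
      nlinarith [hst, mul_pos hG hD]
    linarith
  -- telescoping sum
  have tele : ∀ m : ℕ, ∑ t ∈ Finset.Icc 1 m, (Real.sqrt ((t:ℝ) + 1) - Real.sqrt t)
      = Real.sqrt ((m:ℝ) + 1) - 1 := by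
    intro m
    induction m with
    | zero => simp
    | succ n ih =>
      rw [Finset.sum_Icc_succ_top (by omega), ih]
      push_cast
      ring_nf
  calc ∑ t ∈ Finset.Icc 1 k, g t ⬝ᵥ ((A t)⁻¹ *ᵥ g t)
      ≤ ∑ t ∈ Finset.Icc 1 k, Real.sqrt 2 * G * D * (Real.sqrt ((t:ℝ) + 1) - Real.sqrt t) :=
        Finset.sum_le_sum hterm
    _ = Real.sqrt 2 * G * D * (Real.sqrt (k + 1) - 1) := by
        rw [← Finset.mul_sum, tele k]
end
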